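/- arXiv:1603.02049 — 4 statements merged into one kernel-verified Lean document; each statement's English description precedes it below -/
import Mathlib

section
/- Let (ε_n)_{n∈ℤ} be H-white noise, φ, θ_1, …, θ_q bounded operators on H with ‖φ^{j₀}‖ < 1 for some j₀. Then the series X_n = ∑_{j=0}^{q-1} (∑_{k=0}^j φ^{j−k}θ_k) ε_{n−j} + ∑_{j=q}^∞ φ^{j−q}(∑_{k=0}^q φ^{q−k}θ_k) ε_{n−j} (with θ_0 = I) converges in L²_H and almost surely. -/
/-!
Since `ψ (j + q) = φ ^ j ∘ C` with `C = ∑_{k ≤ q} φ ^ (q - k) ∘ θ k`, the operator norms `‖ψ j‖`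
are dominated by `‖φ ^ j‖ ‖C‖`, and `∑ ‖φ ^ j‖ < ∞` because grouping exponents in blocks of
length `j₀` gives a geometric bound. The noise has constant `L²` norm `√σ²`, so the `L²` norms of
the terms `ψ j ε_{n-j}` are summable. Completeness of `L²` gives convergence in mean square, and a
series whose `L²` norms are summable converges absolutely almost everywhere.
-/

open MeasureTheory Filter Finset
open scoped RealInnerProductSpace ENNReal Topology

section PowerSeries

variable {A : Type*} [NormedRing A]

lemma norm_pow_mul_add_le (a : A) (k j s : ℕ) :
    ‖a ^ (k * j + s)‖ ≤ ‖a ^ j‖ ^ k * ‖a ^ s‖ := by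
  induction k with
  | zero => simp
  | succ k ih =>
    calc ‖a ^ ((k + 1) * j + s)‖ = ‖a ^ j * a ^ (k * j + s)‖ := by
          rw [← pow_add]; ring_nf
      _ ≤ ‖a ^ j‖ * (‖a ^ j‖ ^ k * ‖a ^ s‖) :=
          (norm_mul_le _ _).trans (mul_le_mul_of_nonneg_left ih (norm_nonneg _))
      _ = ‖a ^ j‖ ^ (k + 1) * ‖a ^ s‖ := by ring

theorem summable_norm_pow_of_norm_pow_lt_one {a : A} {j₀ : ℕ} (h : ‖a ^ j₀‖ < 1) :
    Summable fun m : ℕ => ‖a ^ m‖ := by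
  rcases Nat.eq_zero_or_pos j₀ with rfl | hpos
  · have hnorm_zero : ∀ x : A, ‖x‖ = 0 := fun x => by
      have := norm_mul_le (1 : A) x
      rw [one_mul] at this
      rw [pow_zero] at h
      nlinarith [norm_nonneg x, norm_nonneg (1 : A)]
    simp only [hnorm_zero, summable_zero]
  · have : NeZero j₀ := ⟨hpos.ne'⟩
    rw [← (Nat.divModEquiv j₀).symm.summable_iff]
    refine ((summable_geometric_of_lt_one (norm_nonneg _) h).mul_of_nonneg
      (Summable.of_finite (f := fun s : Fin j₀ => ‖a ^ (s : ℕ)‖)) (fun _ => by positivity)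
      (fun _ => norm_nonneg _)).of_nonneg_of_le (fun _ => norm_nonneg _) fun p => ?_
    exact norm_pow_mul_add_le a p.1 j₀ p.2

theorem summable_norm_of_add_eq_pow_mul {a c : A} (ha : Summable fun m : ℕ => ‖a ^ m‖)
    {ψ : ℕ → A} (q : ℕ) (hψ : ∀ i, ψ (i + q) = a ^ i * c) : Summable fun j => ‖ψ j‖ :=
  (summable_nat_add_iff q).mp <| (ha.mul_right ‖c‖).of_nonneg_of_le (fun _ => norm_nonneg _)
    fun i => (hψ i).symm ▸ norm_mul_le _ _

end PowerSeries

section SeriesInLp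

variable {Ω E : Type*} {_ : MeasurableSpace Ω} {μ : Measure Ω} [NormedAddCommGroup E]

theorem exists_memLp_tendsto_eLpNorm_sum_sub [CompleteSpace E] {p : ℝ≥0∞} [Fact (1 ≤ p)]
    {g : ℕ → Ω → E} (hg : ∀ j, MemLp (g j) p μ) (hsum : ∑' j, eLpNorm (g j) p μ ≠ ∞) :
    ∃ X : Ω → E, MemLp X p μ ∧
      Tendsto (fun m => eLpNorm ((∑ j ∈ range m, g j) - X) p μ) atTop (𝓝 0) := by
  set f : ℕ → Lp E p μ := fun j => (hg j).toLp (g j)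
  have hf : Summable f := Summable.of_enorm (by simpa [f, Lp.enorm_toLp] using hsum)
  refine ⟨⇑(∑' j, f j), Lp.memLp _, ?_⟩
  have hlim := (Lp.tendsto_Lp_iff_tendsto_eLpNorm' _ _).mp hf.hasSum.tendsto_sum_nat
  refine hlim.congr fun m => eLpNorm_congr_ae ?_
  filter_upwards [Lp.coeFn_fun_finsetSum (range m) f,
    ae_all_iff.2 fun j => (hg j).coeFn_toLp] with ω hsum_ω hf_ω
  simp only [Pi.sub_apply, hsum_ω, f, hf_ω, Finset.sum_apply]

theorem integral_norm_sq_eq_toReal_eLpNorm_sq {f : Ω → E} (hf : MemLp f 2 μ) :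
    ∫ ω, ‖f ω‖ ^ 2 ∂μ = (eLpNorm f 2 μ).toReal ^ 2 := by
  have hint : 0 ≤ ∫ ω, ‖f ω‖ ^ 2 ∂μ := integral_nonneg fun _ => by positivity
  rw [hf.eLpNorm_eq_integral_rpow_norm two_ne_zero ENNReal.ofNat_ne_top]
  simp only [ENNReal.toReal_ofNat, Real.rpow_two]
  rw [ENNReal.toReal_ofReal (by positivity), ← Real.rpow_natCast, ← Real.rpow_mul hint]
  norm_num

theorem tendsto_integral_norm_sq_of_tendsto_eLpNorm {ι : Type*} {l : Filter ι}
    {f : ι → Ω → E} (hf : ∀ i, MemLp (f i) 2 μ)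
    (h : Tendsto (fun i => eLpNorm (f i) 2 μ) l (𝓝 0)) :
    Tendsto (fun i => ∫ ω, ‖f i ω‖ ^ 2 ∂μ) l (𝓝 0) := by
  simp_rw [fun i => integral_norm_sq_eq_toReal_eLpNorm_sq (hf i)]
  simpa using ((ENNReal.tendsto_toReal ENNReal.zero_ne_top).comp h).pow 2

theorem tsum_eLpNorm_comp_ne_top {𝕜 F : Type*} [NontriviallyNormedField 𝕜]
    [NormedAddCommGroup F] [NormedSpace 𝕜 E] [NormedSpace 𝕜 F] {p : ℝ≥0∞}
    {T : ℕ → E →L[𝕜] F} (hT : Summable fun j => ‖T j‖) {f : ℕ → Ω → E} {C : ℝ≥0∞}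
    (hC : C ≠ ∞) (hf : ∀ j, eLpNorm (f j) p μ ≤ C) :
    ∑' j, eLpNorm (fun ω => T j (f j ω)) p μ ≠ ∞ := by
  have hbound : ∀ j, eLpNorm (fun ω => T j (f j ω)) p μ ≤ ‖T j‖ₑ * C := fun j =>
    (eLpNorm_le_mul_eLpNorm_of_ae_le_mul'
      (Eventually.of_forall fun ω => (T j).le_opENorm _) p).trans (mul_le_mul_right (hf j) _)
  refine ne_top_of_le_ne_top ?_ (ENNReal.tsum_le_tsum hbound)
  rw [ENNReal.tsum_mul_right]
  exact ENNReal.mul_ne_top (tsum_enorm_ne_top_iff_summable_norm.2 hT) hC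

end SeriesInLp

theorem stmt6_general {Ω H : Type*} [MeasurableSpace Ω] (μ : Measure Ω)
    [NormedAddCommGroup H] [InnerProductSpace ℝ H] [CompleteSpace H]
    (ε : ℤ → Ω → H) (σ2 : ℝ)
    (hmem : ∀ n, MemLp (ε n) 2 μ)
    (hvar : ∀ n, ∫ ω, ‖ε n ω‖ ^ 2 ∂μ = σ2)
    (q : ℕ) (φ : H →L[ℝ] H) (θ : ℕ → (H →L[ℝ] H))
    (hφ : ∃ j₀ : ℕ, ‖φ ^ j₀‖ < 1)
    (ψ : ℕ → (H →L[ℝ] H))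
    (hψ : ∀ j : ℕ, ψ j =
      if j < q then ∑ k ∈ Finset.range (j + 1), (φ ^ (j - k)) ∘L θ k
      else (φ ^ (j - q)) ∘L ∑ k ∈ Finset.range (q + 1), (φ ^ (q - k)) ∘L θ k) :
    ∀ n : ℤ,
      (∀ᵐ ω ∂μ, Summable fun j : ℕ => (ψ j) (ε (n - j) ω)) ∧
      ∃ X : Ω → H, MemLp X 2 μ ∧
        Tendsto (fun m : ℕ =>
            ∫ ω, ‖(∑ j ∈ Finset.range m, (ψ j) (ε (n - j) ω)) - X ω‖ ^ 2 ∂μ)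
          atTop (nhds 0) := by
  obtain ⟨j₀, hj₀⟩ := hφ
  have hψ_summable : Summable fun j => ‖ψ j‖ :=
    summable_norm_of_add_eq_pow_mul (summable_norm_pow_of_norm_pow_lt_one hj₀) q fun i => by
      rw [hψ (i + q), if_neg (by omega), Nat.add_sub_cancel]
      rfl
  have hε_norm : ∀ m, eLpNorm (ε m) 2 μ = ENNReal.ofReal √σ2 := fun m => by
    rw [← hvar m, integral_norm_sq_eq_toReal_eLpNorm_sq (hmem m),
      Real.sqrt_sq ENNReal.toReal_nonneg, ENNReal.ofReal_toReal (hmem m).eLpNorm_ne_top]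
  intro n
  set g : ℕ → Ω → H := fun j ω => ψ j (ε (n - j) ω)
  have hg : ∀ j, MemLp (g j) 2 μ := fun j => (ψ j).comp_memLp' (hmem _)
  have hg_norm : ∑' j, eLpNorm (g j) 2 μ ≠ ∞ :=
    tsum_eLpNorm_comp_ne_top hψ_summable ENNReal.ofReal_ne_top fun j => (hε_norm _).le
  refine ⟨(summable_norm_of_tsum_eLpNorm_ne_top one_le_two (fun j => (hg j).1) hg_norm).mono
    fun ω h => h.of_norm, ?_⟩
  obtain ⟨X, hX, hlim⟩ := exists_memLp_tendsto_eLpNorm_sum_sub hg hg_norm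
  refine ⟨X, hX, ?_⟩
  simpa [g, Finset.sum_apply] using tendsto_integral_norm_sq_of_tendsto_eLpNorm
    (fun m => (memLp_finsetSum' _ fun j _ => hg j).sub hX) hlim

/-- The causal series defining the solution of the functional ARMA(1,q) equation
converges almost surely and in `L²_H`. -/
theorem stmt6 {Ω H : Type*} [MeasurableSpace Ω] (μ : Measure Ω) [IsProbabilityMeasure μ]
    [NormedAddCommGroup H] [InnerProductSpace ℝ H] [CompleteSpace H]
    [SecondCountableTopology H]
    (ε : ℤ → Ω → H) (σ2 : ℝ)
    (hmem : ∀ n, MemLp (ε n) 2 μ)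
    (hmean : ∀ n (y : H), ∫ ω, ⟪ε n ω, y⟫ ∂μ = 0)
    (hvar : ∀ n, ∫ ω, ‖ε n ω‖ ^ 2 ∂μ = σ2)
    (hcov : ∀ n (y : H), ∫ ω, ⟪ε n ω, y⟫ • ε n ω ∂μ = ∫ ω, ⟪ε 0 ω, y⟫ • ε 0 ω ∂μ)
    (hcross : ∀ n m : ℤ, n ≠ m → ∀ y : H, ∫ ω, ⟪ε m ω, y⟫ • ε n ω ∂μ = 0)
    (q : ℕ) (φ : H →L[ℝ] H) (θ : ℕ → (H →L[ℝ] H)) (hθ0 : θ 0 = 1)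
    (hφ : ∃ j₀ : ℕ, ‖φ ^ j₀‖ < 1)
    (ψ : ℕ → (H →L[ℝ] H))
    (hψ : ∀ j : ℕ, ψ j =
      if j < q then ∑ k ∈ Finset.range (j + 1), (φ ^ (j - k)) ∘L θ k
      else (φ ^ (j - q)) ∘L ∑ k ∈ Finset.range (q + 1), (φ ^ (q - k)) ∘L θ k) :
    ∀ n : ℤ,
      (∀ᵐ ω ∂μ, Summable fun j : ℕ => (ψ j) (ε (n - j) ω)) ∧
      ∃ X : Ω → H, MemLp X 2 μ ∧
        Tendsto (fun m : ℕ =>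
            ∫ ω, ‖(∑ j ∈ Finset.range m, (ψ j) (ε (n - j) ω)) - X ω‖ ^ 2 ∂μ)
          atTop (nhds 0) :=
  stmt6_general μ ε σ2 hmem hvar q φ θ hφ ψ hψ
end

section
/- Under Assumption ‖φ^{j₀}‖ < 1 for some j₀ ∈ ℕ, the process X_n = ∑_{j=0}^{q-1} (∑_{k=0}^j φ^{j−k}θ_k) ε_{n−j} + ∑_{j=q}^∞ φ^{j−q}(∑_{k=0}^q φ^{q−k}θ_k) ε_{n−j} satisfies the functional ARMA(1,q) equation X_n = φ X_{n−1} + ∑_{j=1}^q θ_j ε_{n−j} + ε_n for all n ∈ ℤ. -/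
/-!
The coefficients `ψ j` of the causal series satisfy `ψ 0 = 1` and
`ψ (j + 1) = φ ψ j + 𝟙[j < q] θ (j + 1)`, so splitting off the term `j = 0` of the series for
`X n` and shifting the index yields `φ (X (n - 1))` plus the moving-average part. The
rearrangement is legitimate because the series converges absolutely almost surely:
`‖φ ^ (j + j₀)‖ ≤ ‖φ ^ j₀‖ ‖φ ^ j‖` makes `‖φ ^ j‖`, hence `‖ψ j‖`, summable, while the `ε n`
have a common `L²` norm.
-/

open MeasureTheory
open scoped RealInnerProductSpace ENNReal

theorem summable_of_le_mul_add {a : ℕ → ℝ} {m : ℕ} {ρ : ℝ} (ha : ∀ j, 0 ≤ a j) (hρ₀ : 0 ≤ ρ)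
    (hρ : ρ < 1) (h : ∀ j, a (j + m) ≤ ρ * a j) : Summable a := by
  rcases Nat.eq_zero_or_pos m with rfl | hm
  · refine summable_zero.congr fun j => ?_
    have hj : a j ≤ ρ * a j := h j
    exact le_antisymm (ha j) (by nlinarith [ha j])
  have : NeZero m := ⟨hm.ne'⟩
  have hblock : ∀ k r, a (m * k + r) ≤ ρ ^ k * a r := by
    intro k r
    induction k with
    | zero => simp
    | succ k ih =>
      calc a (m * (k + 1) + r) = a (m * k + r + m) := by ring_nf
        _ ≤ ρ * a (m * k + r) := h _
        _ ≤ ρ * (ρ ^ k * a r) := by gcongr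
        _ = ρ ^ (k + 1) * a r := by ring
  have hprod : Summable fun p : ℕ × Fin m => ρ ^ p.1 * a p.2 :=
    (summable_geometric_of_lt_one hρ₀ hρ).mul_of_nonneg (g := fun r : Fin m => a r)
      Summable.of_finite (fun k => pow_nonneg hρ₀ k) (fun r => ha r)
  refine .of_nonneg_of_le ha (fun j => ?_) (hprod.comp_injective (Nat.divModEquiv m).injective)
  simpa [Nat.div_add_mod] using hblock (j / m) (j % m)

theorem summable_norm_pow_of_norm_pow_lt_one_s7 {A : Type*} [NormedRing A] {x : A} {m : ℕ}
    (hx : ‖x ^ m‖ < 1) : Summable fun j => ‖x ^ j‖ :=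
  summable_of_le_mul_add (fun _ => norm_nonneg _) (norm_nonneg _) hx fun j => by
    rw [pow_add, mul_comm ‖x ^ m‖]
    exact norm_mul_le _ _

section CausalCoeff

variable {R : Type*} [Ring R] (q : ℕ) (φ : R) (θ : ℕ → R)

def causalCoeff (j : ℕ) : R :=
  if j < q then ∑ k ∈ Finset.range (j + 1), φ ^ (j - k) * θ k
  else φ ^ (j - q) * ∑ k ∈ Finset.range (q + 1), φ ^ (q - k) * θ k

theorem causalCoeff_of_le {j : ℕ} (hj : j ≤ q) :
    causalCoeff q φ θ j = ∑ k ∈ Finset.range (j + 1), φ ^ (j - k) * θ k := by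
  rcases hj.lt_or_eq with hj | rfl
  · exact if_pos hj
  · simp [causalCoeff]

theorem causalCoeff_of_ge {j : ℕ} (hj : q ≤ j) :
    causalCoeff q φ θ j = φ ^ (j - q) * causalCoeff q φ θ q := by
  rw [causalCoeff_of_le q φ θ le_rfl, causalCoeff, if_neg hj.not_gt]

theorem causalCoeff_zero (hθ0 : θ 0 = 1) : causalCoeff q φ θ 0 = 1 := by
  simp [causalCoeff_of_le q φ θ (Nat.zero_le q), hθ0]

theorem causalCoeff_succ (j : ℕ) :
    causalCoeff q φ θ (j + 1) = φ * causalCoeff q φ θ j + if j < q then θ (j + 1) else 0 := by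
  rcases lt_or_ge j q with hj | hj
  · rw [causalCoeff_of_le q φ θ hj, causalCoeff_of_le q φ θ hj.le, Finset.sum_range_succ,
      Finset.mul_sum, if_pos hj, Nat.sub_self, pow_zero, one_mul]
    congr 1
    refine Finset.sum_congr rfl fun k hk => ?_
    have hkj := Finset.mem_range_succ_iff.mp hk
    rw [← mul_assoc, ← pow_succ']
    congr 2
    omega
  · rw [causalCoeff_of_ge q φ θ (hj.trans j.le_succ), causalCoeff_of_ge q φ θ hj, if_neg hj.not_gt,
      add_zero, ← mul_assoc, ← pow_succ']
    congr 2
    omega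

end CausalCoeff

theorem summable_norm_causalCoeff {A : Type*} [NormedRing A] (q : ℕ) (φ : A) (θ : ℕ → A)
    {j₀ : ℕ} (hφ : ‖φ ^ j₀‖ < 1) : Summable fun j => ‖causalCoeff q φ θ j‖ := by
  rw [← summable_nat_add_iff q]
  refine .of_nonneg_of_le (fun _ => norm_nonneg _) (fun j => ?_)
    ((summable_norm_pow_of_norm_pow_lt_one_s7 hφ).mul_right ‖causalCoeff q φ θ q‖)
  rw [causalCoeff_of_ge q φ θ (Nat.le_add_left q j), Nat.add_sub_cancel]
  exact norm_mul_le _ _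

theorem ae_summable_norm_apply_of_eLpNorm_le {Ω 𝕜 E F : Type*} [MeasurableSpace Ω]
    {μ : Measure Ω} [NontriviallyNormedField 𝕜] [NormedAddCommGroup E] [NormedSpace 𝕜 E]
    [NormedAddCommGroup F] [NormedSpace 𝕜 F] {p : ℝ≥0∞} (hp : 1 ≤ p) {T : ℕ → E →L[𝕜] F}
    (hT : Summable fun j => ‖T j‖) {f : ℕ → Ω → E} (hf : ∀ j, AEStronglyMeasurable (f j) μ)
    {C : ℝ≥0∞} (hC : C ≠ ∞) (hfC : ∀ j, eLpNorm (f j) p μ ≤ C) :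
    ∀ᵐ ω ∂μ, Summable fun j => ‖T j (f j ω)‖ := by
  refine summable_norm_of_tsum_eLpNorm_ne_top hp
    (fun j => (T j).continuous.comp_aestronglyMeasurable (hf j)) ?_
  have hle : ∀ j, eLpNorm (fun ω => T j (f j ω)) p μ ≤ ‖T j‖ₑ * C := fun j =>
    (eLpNorm_le_mul_eLpNorm_of_ae_le_mul'' p (hf j) (ae_of_all _ fun _ => (T j).le_opENorm _)).trans
      (by gcongr; exact hfC j)
  refine ne_top_of_le_ne_top ?_ (ENNReal.tsum_le_tsum hle)
  rw [ENNReal.tsum_mul_right]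
  exact ENNReal.mul_ne_top (tsum_enorm_ne_top_iff_summable_norm.mpr hT) hC

theorem tsum_apply_sub_eq_of_succ_eq {R E : Type*} [Semiring R] [AddCommGroup E] [Module R E]
    [TopologicalSpace E] [IsTopologicalAddGroup E] [T2Space E] {q : ℕ} {φ : E →L[R] E}
    {θ ψ : ℕ → E →L[R] E} (hψ0 : ψ 0 = 1)
    (hψ : ∀ j, ψ (j + 1) = φ * ψ j + if j < q then θ (j + 1) else 0) (x : ℤ → E) (n : ℤ)
    (hn : Summable fun j : ℕ => ψ j (x (n - j)))
    (hn1 : Summable fun j : ℕ => ψ j (x (n - 1 - j))) :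
    ∑' j : ℕ, ψ j (x (n - j)) =
      φ (∑' j : ℕ, ψ j (x (n - 1 - j))) + ∑ j ∈ Finset.Icc 1 q, θ j (x (n - j)) + x n := by
  set g : ℕ → E := fun j => if j < q then θ (j + 1) (x (n - 1 - j)) else 0
  have hidx : ∀ j : ℕ, n - ↑(j + 1) = n - 1 - j := fun j => by push_cast; ring
  have hshift : ∀ j : ℕ, ψ (j + 1) (x (n - ↑(j + 1))) = φ (ψ j (x (n - 1 - j))) + g j := by
    intro j
    rw [hidx, hψ, add_apply, mul_apply_eq_comp]
    simp only [g, apply_ite (fun T : E →L[R] E => T (x (n - 1 - j))), zero_apply]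
  have hg_supp : ∀ j ∉ Finset.range q, g j = 0 := fun j hj => if_neg (by simpa using hj)
  have hg : ∑' j, g j = ∑ j ∈ Finset.Icc 1 q, θ j (x (n - j)) := by
    rw [tsum_eq_sum hg_supp, Finset.sum_congr rfl fun j hj => if_pos (Finset.mem_range.mp hj),
      ← Finset.Ico_add_one_right_eq_Icc, ← zero_add 1, ← Finset.sum_Ico_add',
      ← Finset.range_eq_Ico]
    simp only [hidx]
  calc ∑' j : ℕ, ψ j (x (n - j))
      = ψ 0 (x (n - ↑(0 : ℕ))) + ∑' j : ℕ, ψ (j + 1) (x (n - ↑(j + 1))) := hn.tsum_eq_zero_add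
    _ = x n + ∑' j : ℕ, (φ (ψ j (x (n - 1 - j))) + g j) := by
      rw [hψ0, tsum_congr hshift]
      simp
    _ = x n + (φ (∑' j : ℕ, ψ j (x (n - 1 - j))) + ∑ j ∈ Finset.Icc 1 q, θ j (x (n - j))) := by
      rw [(hn1.mapL φ).tsum_add (summable_of_ne_finset_zero hg_supp), hg, φ.map_tsum hn1]
    _ = _ := by abel

theorem stmt7_general {Ω H : Type*} [MeasurableSpace Ω] (μ : Measure Ω)
    [NormedAddCommGroup H] [InnerProductSpace ℝ H] [CompleteSpace H]
    (ε : ℤ → Ω → H) (σ2 : ℝ)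
    (hmem : ∀ n, MemLp (ε n) 2 μ)
    (hvar : ∀ n, ∫ ω, ‖ε n ω‖ ^ 2 ∂μ = σ2)
    (q : ℕ) (φ : H →L[ℝ] H) (θ : ℕ → (H →L[ℝ] H)) (hθ0 : θ 0 = 1)
    (hφ : ∃ j₀ : ℕ, ‖φ ^ j₀‖ < 1)
    (ψ : ℕ → (H →L[ℝ] H))
    (hψ : ∀ j : ℕ, ψ j =
      if j < q then ∑ k ∈ Finset.range (j + 1), (φ ^ (j - k)) ∘L θ k
      else (φ ^ (j - q)) ∘L ∑ k ∈ Finset.range (q + 1), (φ ^ (q - k)) ∘L θ k)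
    (X : ℤ → Ω → H) (hX : ∀ n ω, X n ω = ∑' j : ℕ, (ψ j) (ε (n - j) ω)) :
    ∀ n : ℤ, ∀ᵐ ω ∂μ,
      X n ω = φ (X (n - 1) ω) + (∑ j ∈ Finset.Icc 1 q, (θ j) (ε (n - j) ω)) + ε n ω := by
  obtain rfl : ψ = causalCoeff q φ θ := funext hψ
  obtain ⟨j₀, hj₀⟩ := hφ
  have hε : ∀ k, eLpNorm (ε k) 2 μ = ENNReal.ofReal (σ2 ^ (2 : ℝ)⁻¹) := fun k => by
    simp [(hmem k).eLpNorm_eq_integral_rpow_norm two_ne_zero ENNReal.ofNat_ne_top, hvar]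
  have hsum : ∀ m : ℤ, ∀ᵐ ω ∂μ, Summable fun j : ℕ => causalCoeff q φ θ j (ε (m - j) ω) :=
    fun m => (ae_summable_norm_apply_of_eLpNorm_le one_le_two
      (summable_norm_causalCoeff q φ θ hj₀) (fun j => (hmem (m - j)).1) ENNReal.ofReal_ne_top
      (fun j => (hε (m - j)).le)).mono fun _ hω => hω.of_norm
  intro n
  filter_upwards [hsum n, hsum (n - 1)] with ω hn hn1
  rw [hX, hX]
  exact tsum_apply_sub_eq_of_succ_eq (causalCoeff_zero q φ θ hθ0) (causalCoeff_succ q φ θ)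
    (ε · ω) n hn hn1

/-- The causal series solves the functional ARMA(1,q) equation
`X_n = φ X_{n-1} + ∑_{j=1}^q θ_j ε_{n-j} + ε_n`. -/
theorem stmt7 {Ω H : Type*} [MeasurableSpace Ω] (μ : Measure Ω) [IsProbabilityMeasure μ]
    [NormedAddCommGroup H] [InnerProductSpace ℝ H] [CompleteSpace H]
    [SecondCountableTopology H]
    (ε : ℤ → Ω → H) (σ2 : ℝ)
    (hmem : ∀ n, MemLp (ε n) 2 μ)
    (hmean : ∀ n (y : H), ∫ ω, ⟪ε n ω, y⟫ ∂μ = 0)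
    (hvar : ∀ n, ∫ ω, ‖ε n ω‖ ^ 2 ∂μ = σ2)
    (hcov : ∀ n (y : H), ∫ ω, ⟪ε n ω, y⟫ • ε n ω ∂μ = ∫ ω, ⟪ε 0 ω, y⟫ • ε 0 ω ∂μ)
    (hcross : ∀ n m : ℤ, n ≠ m → ∀ y : H, ∫ ω, ⟪ε m ω, y⟫ • ε n ω ∂μ = 0)
    (q : ℕ) (φ : H →L[ℝ] H) (θ : ℕ → (H →L[ℝ] H)) (hθ0 : θ 0 = 1)
    (hφ : ∃ j₀ : ℕ, ‖φ ^ j₀‖ < 1)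
    (ψ : ℕ → (H →L[ℝ] H))
    (hψ : ∀ j : ℕ, ψ j =
      if j < q then ∑ k ∈ Finset.range (j + 1), (φ ^ (j - k)) ∘L θ k
      else (φ ^ (j - q)) ∘L ∑ k ∈ Finset.range (q + 1), (φ ^ (q - k)) ∘L θ k)
    (X : ℤ → Ω → H) (hX : ∀ n ω, X n ω = ∑' j : ℕ, (ψ j) (ε (n - j) ω)) :
    ∀ n : ℤ, ∀ᵐ ω ∂μ,
      X n ω = φ (X (n - 1) ω) + (∑ j ∈ Finset.Icc 1 q, (θ j) (ε (n - j) ω)) + ε n ω :=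
  stmt7_general μ ε σ2 hmem hvar q φ θ hθ0 hφ ψ hψ X hX
end

section
/- Let X be a mean-zero H-valued random variable with covariance eigenpairs (λ_l, ν_l), and φ a bounded operator on H. For d ∈ ℕ let Φ^∞ X^∞ denote the d-dimensional vector with l-th component ∑_{l'=d+1}^∞ ⟨φν_{l'},ν_l⟩⟨X,ν_{l'}⟩. Then E‖Φ^∞X^∞‖₂² ≤ ‖φ‖²_{L} · ∑_{l'=d+1}^∞ λ_{l'}. -/
/-!
Let `Y = ∑_{l' > d} ⟨X, ν_{l'}⟩ ν_{l'}` be the component of `X` orthogonal to the first `d` basis vectors.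
The `l`-th coordinate of `Φ^∞X^∞` is `⟨φY, ν_l⟩`, so by Bessel's inequality
`‖Φ^∞X^∞‖₂² ≤ ‖φY‖² ≤ ‖φ‖²_L ‖Y‖² = ‖φ‖²_L ∑_{l'>d} ⟨X, ν_{l'}⟩²` pointwise. Taking expectations
and exchanging sum and integral (Tonelli for the nonnegative summands) gives the claim.
-/

open MeasureTheory
open scoped RealInnerProductSpace

section Orthonormal

variable {ι κ H : Type*} [NormedAddCommGroup H] [InnerProductSpace ℝ H] {v : κ → H}

theorem Orthonormal.tsum_sq_inner_le (hv : Orthonormal ℝ v) (x : H) :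
    ∑' k, ⟪x, v k⟫ ^ 2 ≤ ‖x‖ ^ 2 := by
  simpa only [real_inner_comm x, Real.norm_eq_abs, sq_abs] using hv.tsum_inner_products_le (x := x)

theorem Orthonormal.summable_sq_inner (hv : Orthonormal ℝ v) (x : H) :
    Summable fun k => ⟪x, v k⟫ ^ 2 := by
  simpa only [real_inner_comm x, Real.norm_eq_abs, sq_abs] using hv.inner_products_summable (x := x)

theorem Orthonormal.summable_inner_smul [CompleteSpace H] (hv : Orthonormal ℝ v) (x : H) :
    Summable fun k => ⟪x, v k⟫ • v k :=
  (hv.orthogonalFamily.summable_iff_norm_sq_summable fun k => ⟪x, v k⟫).2 <| by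
    simpa only [Real.norm_eq_abs, sq_abs] using hv.summable_sq_inner x

theorem Orthonormal.inner_right_of_hasSum (hv : Orthonormal ℝ v) {c : κ → ℝ} {y : H}
    (hy : HasSum (fun k => c k • v k) y) (j : κ) : ⟪v j, y⟫ = c j := by
  classical
  have hterms : (fun k => ⟪v j, c k • v k⟫) = fun k => if k = j then c j else 0 := by
    funext k
    rw [real_inner_smul_right, orthonormal_iff_ite.mp hv j k]
    rcases eq_or_ne k j with rfl | hkj
    · simp
    · simp [hkj, hkj.symm]
  have h := hy.mapL (innerSL ℝ (v j))
  simp only [innerSL_apply_apply, hterms] at h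
  exact h.unique (hasSum_ite_eq j _)

theorem Orthonormal.hasSum_sq_of_hasSum (hv : Orthonormal ℝ v) {c : κ → ℝ} {y : H}
    (hy : HasSum (fun k => c k • v k) y) : HasSum (fun k => c k ^ 2) (‖y‖ ^ 2) := by
  have h := hy.mapL (innerSL ℝ y)
  simp only [innerSL_apply_apply, real_inner_smul_right, real_inner_self_eq_norm_sq] at h
  have hterms : (fun k => c k * ⟪y, v k⟫) = fun k => c k ^ 2 := funext fun k => by
    rw [real_inner_comm, hv.inner_right_of_hasSum hy, sq]
  rwa [hterms] at h

theorem Orthonormal.sum_sq_tsum_inner_le [CompleteSpace H] {u : ι → H} (hu : Orthonormal ℝ u)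
    (hv : Orthonormal ℝ v) (φ : H →L[ℝ] H) (s : Finset ι) (x : H) :
    ∑ l ∈ s, (∑' k, ⟪φ (v k), u l⟫ * ⟪x, v k⟫) ^ 2 ≤ ‖φ‖ ^ 2 * ∑' k, ⟪x, v k⟫ ^ 2 := by
  obtain ⟨y, hy⟩ := hv.summable_inner_smul x
  have hcoord : ∀ l, ∑' k, ⟪φ (v k), u l⟫ * ⟪x, v k⟫ = ⟪u l, φ y⟫ := fun l => by
    have h := hy.mapL ((innerSL ℝ (u l)).comp φ)
    simp only [ContinuousLinearMap.comp_apply, innerSL_apply_apply, map_smul] at h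
    refine (tsum_congr fun k => ?_).trans h.tsum_eq
    rw [smul_eq_mul, mul_comm, real_inner_comm (u l)]
  calc ∑ l ∈ s, (∑' k, ⟪φ (v k), u l⟫ * ⟪x, v k⟫) ^ 2
      = ∑ l ∈ s, ‖⟪u l, φ y⟫‖ ^ 2 := by simp only [hcoord, Real.norm_eq_abs, sq_abs]
    _ ≤ ‖φ y‖ ^ 2 := hu.sum_inner_products_le (φ y)
    _ ≤ (‖φ‖ * ‖y‖) ^ 2 := by gcongr; exact φ.le_opNorm y
    _ = ‖φ‖ ^ 2 * ∑' k, ⟪x, v k⟫ ^ 2 := by rw [mul_pow, (hv.hasSum_sq_of_hasSum hy).tsum_eq]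

end Orthonormal

section Integral

variable {Ω ι : Type*} [MeasurableSpace Ω] {μ : Measure Ω} [Countable ι] {f : ι → Ω → ℝ}

theorem aestronglyMeasurable_tsum (hf : ∀ i, AEStronglyMeasurable (f i) μ)
    (hsum : ∀ ω, Summable fun i => f i ω) : AEStronglyMeasurable (fun ω => ∑' i, f i ω) μ :=
  aestronglyMeasurable_of_tendsto_ae Filter.atTop
    (fun s => Finset.aestronglyMeasurable_fun_sum s fun i _ => hf i)
    (Filter.Eventually.of_forall fun ω => (hsum ω).hasSum)

theorem integral_tsum_of_nonneg (hf : ∀ i, Integrable (f i) μ) (hf0 : ∀ i ω, 0 ≤ f i ω)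
    (hsum : ∀ ω, Summable fun i => f i ω) :
    ∫ ω, ∑' i, f i ω ∂μ = ∑' i, ∫ ω, f i ω ∂μ := by
  have hf_lintegral : ∀ i, ∫ ω, f i ω ∂μ = (∫⁻ ω, ENNReal.ofReal (f i ω) ∂μ).toReal := fun i =>
    integral_eq_lintegral_of_nonneg_ae (.of_forall (hf0 i)) (hf i).1
  rw [integral_eq_lintegral_of_nonneg_ae (.of_forall fun ω => tsum_nonneg fun i => hf0 i ω)
      (aestronglyMeasurable_tsum (fun i => (hf i).1) hsum)]
  simp only [ENNReal.ofReal_tsum_of_nonneg (fun i => hf0 i _) (hsum _), hf_lintegral]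
  rw [lintegral_tsum fun i => (hf i).1.aemeasurable.ennreal_ofReal,
    ENNReal.tsum_toReal_eq fun i => (hf i).lintegral_lt_top.ne]

end Integral

section SquaredScores

variable {Ω κ H : Type*} [MeasurableSpace Ω] {μ : Measure Ω} [NormedAddCommGroup H]
  [InnerProductSpace ℝ H] [Countable κ] {v : κ → H} {X : Ω → H}

theorem MeasureTheory.MemLp.integrable_tsum_sq_inner (hX : MemLp X 2 μ) (hv : Orthonormal ℝ v) :
    Integrable (fun ω => ∑' k, ⟪X ω, v k⟫ ^ 2) μ := by
  refine hX.norm.integrable_sq.mono'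
    (aestronglyMeasurable_tsum (fun k => (hX.inner_const (v k)).integrable_sq.1)
      fun ω => hv.summable_sq_inner (X ω)) (.of_forall fun ω => ?_)
  rw [Real.norm_of_nonneg (tsum_nonneg fun k => sq_nonneg _)]
  exact hv.tsum_sq_inner_le (X ω)

theorem MeasureTheory.MemLp.integral_tsum_sq_inner (hX : MemLp X 2 μ) (hv : Orthonormal ℝ v) :
    ∫ ω, ∑' k, ⟪X ω, v k⟫ ^ 2 ∂μ = ∑' k, ∫ ω, ⟪X ω, v k⟫ ^ 2 ∂μ :=
  integral_tsum_of_nonneg (fun k => (hX.inner_const (v k)).integrable_sq)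
    (fun _ _ => sq_nonneg _) fun ω => hv.summable_sq_inner (X ω)

end SquaredScores

theorem stmt9_general {Ω H : Type*} [MeasurableSpace Ω] (μ : Measure Ω)
    [NormedAddCommGroup H] [InnerProductSpace ℝ H] [CompleteSpace H]
    (X : Ω → H) (hX2 : MemLp X 2 μ)
    (ν : HilbertBasis ℕ ℝ H) (lam : ℕ → ℝ)
    (hvar : ∀ l : ℕ, ∫ ω, ⟪X ω, ν l⟫ ^ 2 ∂μ = lam l)
    (φ : H →L[ℝ] H) (d : ℕ) :
    ∫ ω, ∑ l ∈ Finset.range d,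
        (∑' k : ℕ, ⟪φ (ν (d + k)), ν l⟫ * ⟪X ω, ν (d + k)⟫) ^ 2 ∂μ
      ≤ ‖φ‖ ^ 2 * ∑' k : ℕ, lam (d + k) := by
  have htail : Orthonormal ℝ fun k => ν (d + k) :=
    ν.orthonormal.comp _ (add_right_injective d)
  calc ∫ ω, ∑ l ∈ Finset.range d,
          (∑' k : ℕ, ⟪φ (ν (d + k)), ν l⟫ * ⟪X ω, ν (d + k)⟫) ^ 2 ∂μ
      ≤ ∫ ω, ‖φ‖ ^ 2 * ∑' k : ℕ, ⟪X ω, ν (d + k)⟫ ^ 2 ∂μ :=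
        integral_mono_of_nonneg (.of_forall fun ω => Finset.sum_nonneg fun _ _ => sq_nonneg _)
          ((hX2.integrable_tsum_sq_inner htail).const_mul _)
          (.of_forall fun ω => ν.orthonormal.sum_sq_tsum_inner_le htail φ _ (X ω))
    _ = ‖φ‖ ^ 2 * ∑' k : ℕ, lam (d + k) := by
        rw [integral_const_mul, hX2.integral_tsum_sq_inner htail]
        simp only [hvar]

/-- Bound for the truncation error term `Φ^∞ X^∞`:
`E‖Φ^∞X^∞‖₂² ≤ ‖φ‖²_L · ∑_{l'>d} λ_{l'}`. -/
theorem stmt9 {Ω H : Type*} [MeasurableSpace Ω] (μ : Measure Ω) [IsProbabilityMeasure μ]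
    [NormedAddCommGroup H] [InnerProductSpace ℝ H] [CompleteSpace H]
    [SecondCountableTopology H]
    (X : Ω → H) (hX2 : MemLp X 2 μ)
    (hmean : ∀ y : H, ∫ ω, ⟪X ω, y⟫ ∂μ = 0)
    (ν : HilbertBasis ℕ ℝ H) (lam : ℕ → ℝ) (hsum : Summable lam)
    (hvar : ∀ l : ℕ, ∫ ω, ⟪X ω, ν l⟫ ^ 2 ∂μ = lam l)
    (huncorr : ∀ l l' : ℕ, l ≠ l' → ∫ ω, ⟪X ω, ν l⟫ * ⟪X ω, ν l'⟫ ∂μ = 0)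
    (φ : H →L[ℝ] H) (d : ℕ) :
    ∫ ω, ∑ l ∈ Finset.range d,
        (∑' k : ℕ, ⟪φ (ν (d + k)), ν l⟫ * ⟪X ω, ν (d + k)⟫) ^ 2 ∂μ
      ≤ ‖φ‖ ^ 2 * ∑' k : ℕ, lam (d + k) :=
  stmt9_general μ X hX2 ν lam hvar φ d
end

section
/- Let G be an L-closed subspace of L²_H (closed under composition with bounded operators), X ∈ L²_H, and X̂ = P_G X the orthogonal projection of X onto G (so E⟨X − X̂, Y⟩ = 0 for all Y ∈ G). Let (ν_l) be an orthonormal basis of H. Then for all j, l ∈ ℕ and all Y ∈ G: E[⟨X − X̂, ν_l⟩⟨Y, ν_j⟩] = 0. -/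
open MeasureTheory
open scoped RealInnerProductSpace

theorem integral_inner_mul_inner_eq_zero {Ω H : Type*} [MeasurableSpace Ω] {μ : Measure Ω}
    [NormedAddCommGroup H] [InnerProductSpace ℝ H] {G : Set (Ω → H)}
    (hG : ∀ Y ∈ G, ∀ g : H →L[ℝ] H, (fun ω => g (Y ω)) ∈ G)
    {E : Ω → H} (hE : ∀ Y ∈ G, ∫ ω, ⟪E ω, Y ω⟫ ∂μ = 0)
    (u v : H) {Y : Ω → H} (hY : Y ∈ G) :
    ∫ ω, ⟪E ω, u⟫ * ⟪Y ω, v⟫ ∂μ = 0 := by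
  have h := hE _ (hG Y hY (InnerProductSpace.rankOne ℝ u v))
  simpa only [InnerProductSpace.rankOne_apply, real_inner_smul_right, real_inner_comm v,
    mul_comm] using h

theorem stmt18_general {Ω H : Type*} [MeasurableSpace Ω] (μ : Measure Ω)
    [NormedAddCommGroup H] [InnerProductSpace ℝ H]
    (G : Set (Ω → H))
    (hG : ∀ Y ∈ G, ∀ g : H →L[ℝ] H, (fun ω => g (Y ω)) ∈ G)
    (X Xhat : Ω → H)
    (hproj : ∀ Y ∈ G, ∫ ω, ⟪X ω - Xhat ω, Y ω⟫ ∂μ = 0)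
    (ν : HilbertBasis ℕ ℝ H) :
    ∀ (j l : ℕ), ∀ Y ∈ G,
      ∫ ω, ⟪X ω - Xhat ω, ν l⟫ * ⟪Y ω, ν j⟫ ∂μ = 0 :=
  fun j l _ hY => integral_inner_mul_inner_eq_zero hG hproj (ν l) (ν j) hY

/-- Orthogonality of the functional prediction error holds also scorewise: if
`X̂ = P_G X` where `G` is an L-closed subspace, then for all `j, l` and `Y ∈ G`,
`E[⟨X − X̂, ν_l⟩⟨Y, ν_j⟩] = 0`. -/
theorem stmt18 {Ω H : Type*} [MeasurableSpace Ω] (μ : Measure Ω) [IsProbabilityMeasure μ]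
    [NormedAddCommGroup H] [InnerProductSpace ℝ H] [CompleteSpace H]
    [SecondCountableTopology H]
    (G : Set (Ω → H))
    (hG : ∀ Y ∈ G, ∀ g : H →L[ℝ] H, (fun ω => g (Y ω)) ∈ G)
    (X Xhat : Ω → H) (hXhat : Xhat ∈ G)
    (hproj : ∀ Y ∈ G, ∫ ω, ⟪X ω - Xhat ω, Y ω⟫ ∂μ = 0)
    (ν : HilbertBasis ℕ ℝ H) :
    ∀ (j l : ℕ), ∀ Y ∈ G,
      ∫ ω, ⟪X ω - Xhat ω, ν l⟫ * ⟪Y ω, ν j⟫ ∂μ = 0 :=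
  stmt18_general μ G hG X Xhat hproj ν
end
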